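/- arXiv:2012.03715 — 2 statements merged into one kernel-verified Lean document; each statement's English description precedes it below -/
import Mathlib

section
/- Let Z and X be measurable spaces with σ-finite measures. Let π_Z be a probability density on Z, let p : Z × X → [0, ∞) be a measurable decoder density with ∫ p(z, x) dx = 1 for all z, let p_X(x) = ∫ p(z, x) π_Z(z) dz, and let q : X × Z → [0, ∞) be a measurable encoder density satisfying the consistency condition q(x, z) · p_X(x) = p(z, x) · π_Z(z) for almost every (x, z). Define the decode–encode latent transition density Q(z, z′) = ∫ q(x̃, z′) p(z, x̃) dx̃. Then π_Z is invariant under Q: for almost every z′, ∫ Q(z, z′) π_Z(z) dz = π_Z(z′). (This is the first part of Proposition 4 of the paper: the AVAE latent transition kernel is p(Z)-invariant.) -/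
open MeasureTheory
open scoped ENNReal

/-- Proposition 4, first part: if the encoder `q` equals the exact posterior of the decoder
model, i.e. the consistency condition `q(x, z) ⋅ p_X(x) = p(z, x) ⋅ π_Z(z)` holds almost
everywhere, then the decode–encode latent transition density
`Q(z, z') = ∫ q(x̃, z') p(z, x̃) dx̃` leaves the latent prior `π_Z` invariant:
`∫ Q(z, z') π_Z(z) dz = π_Z(z')` for almost every `z'`. -/
theorem avae_latent_kernel_prior_invariant
    {Z X : Type*} [MeasurableSpace Z] [MeasurableSpace X]
    (μZ : Measure Z) (μX : Measure X) [SigmaFinite μZ] [SigmaFinite μX]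
    (πZ : Z → ℝ≥0∞) (hπZmeas : Measurable πZ) (hπZprob : ∫⁻ z, πZ z ∂μZ = 1)
    (p : Z → X → ℝ≥0∞) (hp : Measurable (Function.uncurry p))
    (hpprob : ∀ z, ∫⁻ x, p z x ∂μX = 1)
    (q : X → Z → ℝ≥0∞) (hq : Measurable (Function.uncurry q))
    (pX : X → ℝ≥0∞) (hpX : ∀ x, pX x = ∫⁻ z, p z x * πZ z ∂μZ)
    (hconsistent : ∀ᵐ xz : X × Z ∂(μX.prod μZ),
      q xz.1 xz.2 * pX xz.1 = p xz.2 xz.1 * πZ xz.2)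
    (Q : Z → Z → ℝ≥0∞)
    (hQ : ∀ z z', Q z z' = ∫⁻ x, q x z' * p z x ∂μX) :
    ∀ᵐ z' ∂μZ, ∫⁻ z, Q z z' * πZ z ∂μZ = πZ z' := by
  have hswap : ∀ᵐ zx : Z × X ∂(μZ.prod μX),
      q zx.2 zx.1 * pX zx.2 = p zx.1 zx.2 * πZ zx.1 :=
    Measure.measurePreserving_swap.quasiMeasurePreserving.ae hconsistent
  have h2 := Measure.ae_ae_of_ae_prod hswap
  filter_upwards [h2] with z' hz'
  have hpx : ∀ x, Measurable fun z => p z x := fun x =>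
    hp.comp (measurable_id.prodMk measurable_const)
  have hpz : ∀ z, Measurable fun x => p z x := fun z =>
    hp.comp (measurable_const.prodMk measurable_id)
  have hqz' : Measurable fun x => q x z' :=
    hq.comp (measurable_id.prodMk measurable_const)
  have hqp : ∀ z, Measurable fun x => q x z' * p z x := fun z =>
    hqz'.mul (hpz z)
  calc ∫⁻ z, Q z z' * πZ z ∂μZ
      = ∫⁻ z, ∫⁻ x, q x z' * p z x * πZ z ∂μX ∂μZ := by
        refine lintegral_congr fun z => ?_
        rw [hQ, ← lintegral_mul_const _ (hqp z)]
    _ = ∫⁻ x, ∫⁻ z, q x z' * p z x * πZ z ∂μZ ∂μX := by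
        refine lintegral_lintegral_swap ?_
        exact (((hq.comp (measurable_snd.prodMk measurable_const)).mul hp).mul
          (hπZmeas.comp measurable_fst)).aemeasurable
    _ = ∫⁻ x, q x z' * pX x ∂μX := by
        refine lintegral_congr fun x => ?_
        rw [hpX, ← lintegral_const_mul _ (f := fun z => p z x * πZ z) ((hpx x).mul hπZmeas)]
        exact lintegral_congr fun z => (mul_assoc _ _ _)
    _ = ∫⁻ x, p z' x * πZ z' ∂μX := lintegral_congr_ae hz'
    _ = πZ z' := by
        rw [lintegral_mul_const _ (hpz z'), hpprob, one_mul]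
end

section
/- Let n, k ≥ 1, let W be a real n × k matrix, and let v > 0. Set M = WᵀW + vI_k, J = M⁻¹WᵀW, and S = v(J + I_k)M⁻¹. Then for all z, z′ ∈ ℝᵏ: ∫_{ℝⁿ} 𝒩_k(z′; M⁻¹Wᵀx, vM⁻¹) · 𝒩_n(x; Wz, vI_n) dx = 𝒩_k(z′; Jz, S). That is, in probabilistic PCA the decode–encode latent transition kernel Q(Z′ | Z = z), obtained by decoding z and then sampling from the exact posterior, is Gaussian with mean J_{W,v} z and covariance S. -/
open Matrix Real MeasureTheory

/-- The `d`-dimensional Gaussian density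
`𝒩_d(x; μ, Σ) = (2π)^{-d/2} (det Σ)^{-1/2} exp(-(x-μ)ᵀ Σ⁻¹ (x-μ)/2)`. -/
noncomputable def mvGaussDensity {d : ℕ} (μ : Fin d → ℝ)
    (S : Matrix (Fin d) (Fin d) ℝ) (x : Fin d → ℝ) : ℝ :=
  (2 * π) ^ (-(d : ℝ) / 2) * S.det ^ (-(1 : ℝ) / 2) *
    Real.exp (-((x - μ) ⬝ᵥ (S⁻¹ *ᵥ (x - μ))) / 2)

lemma std_gauss_int (n : ℕ) :
    ∫ y : Fin n → ℝ, Real.exp (-(y ⬝ᵥ y) / 2) = (2 * π) ^ ((n : ℝ) / 2) := by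
  have h1 : ∀ y : Fin n → ℝ, Real.exp (-(y ⬝ᵥ y) / 2)
      = ∏ i, Real.exp (-(1/2 : ℝ) * (y i ^ 2)) := by
    intro y
    rw [← Real.exp_sum]
    congr 1
    simp only [dotProduct, Finset.sum_div, ← Finset.sum_neg_distrib, neg_div, pow_two]
    apply Finset.sum_congr rfl; intros; ring
  simp_rw [h1]
  rw [MeasureTheory.volume_pi, MeasureTheory.integral_fintype_prod_eq_pow (ι := Fin n)
    (fun t : ℝ => Real.exp (-(1/2 : ℝ) * t ^ 2))]
  have h2 : (∫ t : ℝ, Real.exp (-(1/2 : ℝ) * t ^ 2)) = Real.sqrt (2 * π) := by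
    rw [integral_gaussian]
    rw [show π / (1/2 : ℝ) = 2 * π by ring]
  rw [h2, Fintype.card_fin, Real.sqrt_eq_rpow, ← Real.rpow_natCast ((2*π) ^ (1/2:ℝ)) n,
    ← Real.rpow_mul (by positivity)]
  ring_nf

lemma cont_gauss (n : ℕ) : Continuous (fun y : Fin n → ℝ => Real.exp (-(y ⬝ᵥ y) / 2)) := by
  apply Real.continuous_exp.comp
  apply Continuous.div_const
  apply Continuous.neg
  exact continuous_finset_sum _ fun i _ => (continuous_apply i).mul (continuous_apply i)

open scoped MatrixOrder in
lemma gauss_int {n : ℕ} {P : Matrix (Fin n) (Fin n) ℝ} (hP : P.PosDef) (m : Fin n → ℝ) :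
    ∫ x : Fin n → ℝ, Real.exp (-((x - m) ⬝ᵥ (P *ᵥ (x - m))) / 2)
      = (2 * π) ^ ((n : ℝ) / 2) * P.det ^ (-(1:ℝ)/2) := by
  rw [show (∫ x : Fin n → ℝ, Real.exp (-((x - m) ⬝ᵥ (P *ᵥ (x - m))) / 2))
      = ∫ x : Fin n → ℝ, Real.exp (-(x ⬝ᵥ (P *ᵥ x)) / 2) from
    MeasureTheory.integral_sub_right_eq_self (fun x : Fin n → ℝ =>
      Real.exp (-(x ⬝ᵥ (P *ᵥ x)) / 2)) m]
  set B := CFC.sqrt P with hBdef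
  have hBB : B * B = P := CFC.sqrt_mul_sqrt_self P hP.posSemidef.nonneg
  have hBsym : Bᵀ = B := by
    have := (Matrix.nonneg_iff_posSemidef.mp (CFC.sqrt_nonneg P)).isHermitian
    simpa [Matrix.IsHermitian] using this
  have hdetB : B.det ^ 2 = P.det := by rw [← hBB, Matrix.det_mul, sq]
  have hdetP : 0 < P.det := hP.det_pos
  have hdetBne : B.det ≠ 0 := by
    intro h; rw [← hdetB, h] at hdetP; simp at hdetP
  have habs : |B.det| = P.det ^ ((1:ℝ)/2) := by
    rw [← Real.sqrt_sq_eq_abs, hdetB, Real.sqrt_eq_rpow]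
  have hq : ∀ x : Fin n → ℝ, x ⬝ᵥ (P *ᵥ x) = (B *ᵥ x) ⬝ᵥ (B *ᵥ x) := by
    intro x
    calc x ⬝ᵥ P *ᵥ x = (x ᵥ* B) ⬝ᵥ (B *ᵥ x) := by
          rw [← hBB, ← Matrix.mulVec_mulVec, Matrix.dotProduct_mulVec]
      _ = (B *ᵥ x) ⬝ᵥ (B *ᵥ x) := by rw [← hBsym, Matrix.vecMul_transpose, hBsym]
  simp_rw [hq]
  have hmap := Real.map_matrix_volume_pi_eq_smul_volume_pi hdetBne
  have key : ∫ x : Fin n → ℝ, Real.exp (-((B *ᵥ x) ⬝ᵥ (B *ᵥ x)) / 2)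
      = |B.det⁻¹| * ∫ y : Fin n → ℝ, Real.exp (-(y ⬝ᵥ y) / 2) := by
    have h1 : ∫ y : Fin n → ℝ, Real.exp (-(y ⬝ᵥ y) / 2)
        ∂(Measure.map (Matrix.toLin' B) volume)
        = ∫ x : Fin n → ℝ, Real.exp (-((Matrix.toLin' B x) ⬝ᵥ (Matrix.toLin' B x)) / 2) := by
      apply MeasureTheory.integral_map
      · exact (LinearMap.continuous_on_pi _).aemeasurable
      · exact (cont_gauss n).aestronglyMeasurable
    rw [hmap, MeasureTheory.integral_smul_measure] at h1
    simp only [Matrix.toLin'_apply] at h1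
    rw [← h1, ENNReal.toReal_ofReal (abs_nonneg _), smul_eq_mul]
  rw [key, std_gauss_int, abs_inv, habs]
  rw [← Real.rpow_neg_one, ← Real.rpow_mul hdetP.le]
  ring_nf

lemma dsw {p q : ℕ} (C : Matrix (Fin p) (Fin q) ℝ) (a : Fin q → ℝ) (b : Fin p → ℝ) :
    (C *ᵥ a) ⬝ᵥ b = a ⬝ᵥ (Cᵀ *ᵥ b) := by
  rw [Matrix.dotProduct_mulVec a, Matrix.vecMul_transpose]

lemma symdot {p : ℕ} {C : Matrix (Fin p) (Fin p) ℝ} (hC : Cᵀ = C) (a b : Fin p → ℝ) :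
    a ⬝ᵥ (C *ᵥ b) = b ⬝ᵥ (C *ᵥ a) := by
  rw [dotProduct_comm, dsw, hC]

lemma posdef_smul {d : ℕ} {P : Matrix (Fin d) (Fin d) ℝ} (c : ℝ) (hc : 0 < c)
    (hP : P.PosDef) : (c • P).PosDef := by
  constructor
  · have := hP.1
    simp only [Matrix.IsHermitian] at this ⊢
    rw [Matrix.conjTranspose_smul, this]
    simp
  · intro x hx
    exact (hP.smul hc).2 hx

lemma core_identity (n k : ℕ) (W : Matrix (Fin n) (Fin k) ℝ)
    (M N : Matrix (Fin k) (Fin k) ℝ)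
    (hMsym : Mᵀ = M) (hM'sym : M⁻¹ᵀ = M⁻¹) (hN'sym : N⁻¹ᵀ = N⁻¹)
    (hMM : M * M⁻¹ = 1) (hM'M : M⁻¹ * M = 1)
    (hNN : N * N⁻¹ = 1) (hN'N : N⁻¹ * N = 1)
    (hNdef : N = M + Wᵀ * W)
    (AA : Matrix (Fin n) (Fin n) ℝ) (hAAdef : AA = 1 + W * M⁻¹ * Wᵀ)
    (hAsym : AAᵀ = AA)
    (hAA'1 : AA * AA⁻¹ = 1) (hA'A1 : AA⁻¹ * AA = 1)
    (hAinv : AA⁻¹ = 1 - W * N⁻¹ * Wᵀ)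
    (z z' : Fin k → ℝ) (x : Fin n → ℝ)
    (m : Fin n → ℝ) (hm : m = AA⁻¹ *ᵥ (W *ᵥ (z' + z))) :
    (z' - M⁻¹ *ᵥ (Wᵀ *ᵥ x)) ⬝ᵥ (M *ᵥ (z' - M⁻¹ *ᵥ (Wᵀ *ᵥ x)))
      + (x - W *ᵥ z) ⬝ᵥ (x - W *ᵥ z)
    = (x - m) ⬝ᵥ (AA *ᵥ (x - m))
      + (z' - (M⁻¹ * (Wᵀ * W)) *ᵥ z) ⬝ᵥ ((M * N⁻¹ * M) *ᵥ (z' - (M⁻¹ * (Wᵀ * W)) *ᵥ z)) := by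
  have hMNG : M = N - Wᵀ * W := by rw [hNdef]; abel
  have cM : ∀ (p : ℕ) (C : Matrix (Fin k) (Fin p) ℝ), M * (M⁻¹ * C) = C := by
    intro p C; rw [← Matrix.mul_assoc, hMM, Matrix.one_mul]
  have cM' : ∀ (p : ℕ) (C : Matrix (Fin k) (Fin p) ℝ), M⁻¹ * (M * C) = C := by
    intro p C; rw [← Matrix.mul_assoc, hM'M, Matrix.one_mul]
  have cN : ∀ (p : ℕ) (C : Matrix (Fin k) (Fin p) ℝ), N * (N⁻¹ * C) = C := by
    intro p C; rw [← Matrix.mul_assoc, hNN, Matrix.one_mul]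
  have cN' : ∀ (p : ℕ) (C : Matrix (Fin k) (Fin p) ℝ), N⁻¹ * (N * C) = C := by
    intro p C; rw [← Matrix.mul_assoc, hN'N, Matrix.one_mul]
  have cA : ∀ (p : ℕ) (C : Matrix (Fin n) (Fin p) ℝ), AA * (AA⁻¹ * C) = C := by
    intro p C; rw [← Matrix.mul_assoc, hAA'1, Matrix.one_mul]
  have cA' : ∀ (p : ℕ) (C : Matrix (Fin n) (Fin p) ℝ), AA⁻¹ * (AA * C) = C := by
    intro p C; rw [← Matrix.mul_assoc, hA'A1, Matrix.one_mul]
  have I3 : Wᵀ * (AA⁻¹ * W) = Wᵀ * W - Wᵀ * (W * (N⁻¹ * (Wᵀ * W))) := by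
    rw [hAinv]
    simp only [Matrix.sub_mul, Matrix.mul_sub, Matrix.one_mul, Matrix.mul_assoc]
  have I5 : M * (N⁻¹ * (Wᵀ * W)) = Wᵀ * W - Wᵀ * (W * (N⁻¹ * (Wᵀ * W))) := by
    rw [hMNG]
    simp only [Matrix.sub_mul, cN, Matrix.mul_assoc]
  have I6 : Wᵀ * (W * (N⁻¹ * M)) = Wᵀ * W - Wᵀ * (W * (N⁻¹ * (Wᵀ * W))) := by
    conv_lhs => rw [hMNG]
    simp only [Matrix.mul_sub, cN']
    rw [hN'N]
    simp only [Matrix.mul_one, Matrix.mul_assoc, Matrix.mul_sub]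
  have I4 : M * (N⁻¹ * M) = M - (Wᵀ * W - Wᵀ * (W * (N⁻¹ * (Wᵀ * W)))) := by
    conv_lhs => rw [show N⁻¹ * M = N⁻¹ * (N - Wᵀ * W) from by rw [← hMNG]]
    rw [Matrix.mul_sub N⁻¹, hN'N, Matrix.mul_sub, Matrix.mul_one, I5]
  have hGNGsym : (Wᵀ * (W * (N⁻¹ * (Wᵀ * W))))ᵀ = Wᵀ * (W * (N⁻¹ * (Wᵀ * W))) := by
    simp [Matrix.transpose_mul, hN'sym, Matrix.mul_assoc]
  subst hm
  simp only [Matrix.mulVec_sub, Matrix.mulVec_add, dotProduct_sub, dotProduct_add,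
    sub_dotProduct, add_dotProduct, Matrix.mulVec_mulVec, dsw,
    Matrix.transpose_mul, Matrix.transpose_transpose, Matrix.transpose_nonsing_inv,
    hMsym, hM'sym, hN'sym, hAsym, Matrix.add_mulVec, Matrix.sub_mulVec, Matrix.one_mulVec,
    Matrix.transpose_one, Matrix.one_mul, Matrix.mul_one,
    Matrix.mul_assoc, cM, cM', cN, cN', cA, cA', hMM, hM'M, hNN, hN'N, hAA'1, hA'A1]
  rw [show AA *ᵥ x = x + (W * (M⁻¹ * Wᵀ)) *ᵥ x from by
    rw [hAAdef, Matrix.add_mulVec, Matrix.one_mulVec, Matrix.mul_assoc]]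
  simp only [I3, I4, I5, I6, Matrix.sub_mulVec, Matrix.add_mulVec,
    dotProduct_sub, dotProduct_add]
  rw [symdot hGNGsym z z']
  ring

/-- Probabilistic PCA decode–encode latent transition kernel: decoding `z` (Gaussian with
mean `Wz` and covariance `vI`) and then sampling from the exact posterior (Gaussian with
mean `M⁻¹Wᵀx` and covariance `vM⁻¹`, `M = WᵀW + vI`) yields a Gaussian over `z'` with mean
`Jz` and covariance `S = v(J + I)M⁻¹`, where `J = M⁻¹WᵀW`. -/
theorem ppca_decode_encode_kernel (n k : ℕ) (hn : 1 ≤ n) (hk : 1 ≤ k)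
    (W : Matrix (Fin n) (Fin k) ℝ) (v : ℝ) (hv : 0 < v)
    (M : Matrix (Fin k) (Fin k) ℝ) (hM : M = Wᵀ * W + v • (1 : Matrix (Fin k) (Fin k) ℝ))
    (J : Matrix (Fin k) (Fin k) ℝ) (hJ : J = M⁻¹ * (Wᵀ * W))
    (S : Matrix (Fin k) (Fin k) ℝ)
    (hS : S = v • ((J + (1 : Matrix (Fin k) (Fin k) ℝ)) * M⁻¹)) :
    ∀ z z' : Fin k → ℝ,
      (∫ x : Fin n → ℝ,
          mvGaussDensity (M⁻¹ *ᵥ (Wᵀ *ᵥ x)) (v • M⁻¹) z' *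
            mvGaussDensity (W *ᵥ z) (v • (1 : Matrix (Fin n) (Fin n) ℝ)) x) =
        mvGaussDensity (J *ᵥ z) S z' := by
  intro z z'
  -- basic positivity / invertibility facts
  have hG : (Wᵀ * W).PosSemidef := by
    have := Matrix.posSemidef_conjTranspose_mul_self W
    simpa using this
  have hv1 : ∀ d : ℕ, (v • (1 : Matrix (Fin d) (Fin d) ℝ)).PosDef := by
    intro d
    rw [Matrix.smul_one_eq_diagonal]
    exact Matrix.posDef_diagonal_iff.mpr fun _ => hv
  have hMpd : M.PosDef := by
    rw [hM]; exact Matrix.PosDef.posSemidef_add hG (hv1 k)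
  have hNpd : (M + Wᵀ * W).PosDef := hMpd.add_posSemidef hG
  have hApd : ((1 : Matrix (Fin n) (Fin n) ℝ) + W * M⁻¹ * Wᵀ).PosDef := by
    have h2 : (W * M⁻¹ * Wᵀ).PosSemidef := by
      have := hMpd.inv.posSemidef.mul_mul_conjTranspose_same W
      simpa using this
    exact Matrix.PosDef.add_posSemidef Matrix.PosDef.one h2
  have hMdet : IsUnit M.det := isUnit_iff_ne_zero.mpr hMpd.det_pos.ne'
  have hNdet : IsUnit (M + Wᵀ * W).det := isUnit_iff_ne_zero.mpr hNpd.det_pos.ne'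
  have hMM : M * M⁻¹ = 1 := Matrix.mul_nonsing_inv _ hMdet
  have hM'M : M⁻¹ * M = 1 := Matrix.nonsing_inv_mul _ hMdet
  set N := M + Wᵀ * W with hNdef
  have hNN : N * N⁻¹ = 1 := Matrix.mul_nonsing_inv _ hNdet
  have hN'N : N⁻¹ * N = 1 := Matrix.nonsing_inv_mul _ hNdet
  -- Woodbury identity
  have hkey : M⁻¹ - N⁻¹ - M⁻¹ * (Wᵀ * W) * N⁻¹ = 0 := by
    have h1 : M⁻¹ * N * N⁻¹ = M⁻¹ := by rw [Matrix.mul_assoc, hNN, Matrix.mul_one]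
    have h2 : M⁻¹ * N * N⁻¹ = N⁻¹ + M⁻¹ * (Wᵀ * W) * N⁻¹ := by
      rw [hNdef, Matrix.mul_add, Matrix.add_mul, hM'M, Matrix.one_mul]
    have h3 := h1.symm.trans h2
    nth_rewrite 1 [h3]; abel
  set AA := (1 : Matrix (Fin n) (Fin n) ℝ) + W * M⁻¹ * Wᵀ with hAAdef
  have hPQ : (W * M⁻¹ * Wᵀ) * (W * N⁻¹ * Wᵀ) = W * (M⁻¹ * (Wᵀ * W) * N⁻¹) * Wᵀ := by
    simp only [Matrix.mul_assoc]
  have hz0 : W * M⁻¹ * Wᵀ - W * N⁻¹ * Wᵀ - W * (M⁻¹ * (Wᵀ * W) * N⁻¹) * Wᵀ = 0 := by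
    have h4 := congrArg (fun X => W * X * Wᵀ) hkey
    simpa [Matrix.mul_sub, Matrix.sub_mul] using h4
  have hP' : W * M⁻¹ * Wᵀ = W * N⁻¹ * Wᵀ + W * (M⁻¹ * (Wᵀ * W) * N⁻¹) * Wᵀ :=
    sub_eq_zero.mp (by rw [← sub_sub]; exact hz0)
  have hwood : AA * (1 - W * N⁻¹ * Wᵀ) = 1 := by
    rw [hAAdef, Matrix.mul_sub, Matrix.mul_one, Matrix.add_mul, Matrix.one_mul, hPQ, hP']
    abel
  have hAinv : AA⁻¹ = 1 - W * N⁻¹ * Wᵀ := Matrix.inv_eq_right_inv hwood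
  have hAdet : IsUnit AA.det := isUnit_iff_ne_zero.mpr hApd.det_pos.ne'
  have hAA'1 : AA * AA⁻¹ = 1 := Matrix.mul_nonsing_inv _ hAdet
  have hA'A1 : AA⁻¹ * AA = 1 := Matrix.nonsing_inv_mul _ hAdet
  -- symmetry
  have hMsym : Mᵀ = M := by
    rw [hM]; simp [Matrix.transpose_add, Matrix.transpose_mul, Matrix.transpose_smul]
  have hM'sym : M⁻¹ᵀ = M⁻¹ := by rw [Matrix.transpose_nonsing_inv, hMsym]
  have hNsym : Nᵀ = N := by
    rw [hNdef]; simp [Matrix.transpose_add, Matrix.transpose_mul, hMsym]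
  have hN'sym : N⁻¹ᵀ = N⁻¹ := by rw [Matrix.transpose_nonsing_inv, hNsym]
  have hAsym : AAᵀ = AA := by
    rw [hAAdef]
    simp [Matrix.transpose_add, Matrix.transpose_mul, hM'sym, Matrix.mul_assoc]
  -- inverses of scaled matrices
  have hvM : (v • M⁻¹)⁻¹ = v⁻¹ • M := by
    apply Matrix.inv_eq_right_inv
    rw [Matrix.smul_mul, Matrix.mul_smul, hM'M, smul_smul, mul_inv_cancel₀ hv.ne', one_smul]
  have hv1inv : (v • (1 : Matrix (Fin n) (Fin n) ℝ))⁻¹ = v⁻¹ • 1 := by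
    apply Matrix.inv_eq_right_inv
    rw [Matrix.smul_mul, Matrix.mul_smul, Matrix.one_mul, smul_smul,
      mul_inv_cancel₀ hv.ne', one_smul]
  have cM' : ∀ (p : ℕ) (C : Matrix (Fin k) (Fin p) ℝ), M⁻¹ * (M * C) = C := by
    intro p C; rw [← Matrix.mul_assoc, hM'M, Matrix.one_mul]
  have hSval : S = v • (M⁻¹ * (N * M⁻¹)) := by
    rw [hS, hJ, hNdef]
    congr 1
    simp only [Matrix.add_mul, Matrix.mul_add, Matrix.one_mul, Matrix.mul_assoc, cM']
    abel
  have hSinv : S⁻¹ = v⁻¹ • (M * N⁻¹ * M) := by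
    apply Matrix.inv_eq_right_inv
    rw [hSval, Matrix.smul_mul, Matrix.mul_smul, smul_smul, mul_inv_cancel₀ hv.ne', one_smul]
    calc M⁻¹ * (N * M⁻¹) * (M * N⁻¹ * M)
        = M⁻¹ * (N * (M⁻¹ * (M * (N⁻¹ * M)))) := by simp only [Matrix.mul_assoc]
      _ = 1 := by rw [cM', ← Matrix.mul_assoc N N⁻¹, hNN, Matrix.one_mul, hM'M]
  -- position of the completed square
  set m : Fin n → ℝ := AA⁻¹ *ᵥ (W *ᵥ (z' + z)) with hmdef
  set R : ℝ := (z' - J *ᵥ z) ⬝ᵥ (S⁻¹ *ᵥ (z' - J *ᵥ z)) with hRdef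
  -- positive definiteness of v⁻¹ • AA
  have hvApd : ((v⁻¹ • AA) : Matrix (Fin n) (Fin n) ℝ).PosDef :=
    posdef_smul v⁻¹ (inv_pos.mpr hv) hApd
  -- the pointwise identity for the integrand
  have hpt : ∀ x : Fin n → ℝ,
      mvGaussDensity (M⁻¹ *ᵥ (Wᵀ *ᵥ x)) (v • M⁻¹) z' *
        mvGaussDensity (W *ᵥ z) (v • (1 : Matrix (Fin n) (Fin n) ℝ)) x
      = ((2 * π) ^ (-(k : ℝ) / 2) * (v • M⁻¹).det ^ (-(1:ℝ)/2) *
         ((2 * π) ^ (-(n : ℝ) / 2) * (v • (1 : Matrix (Fin n) (Fin n) ℝ)).det ^ (-(1:ℝ)/2)) *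
         Real.exp (-R / 2)) *
        Real.exp (-((x - m) ⬝ᵥ ((v⁻¹ • AA) *ᵥ (x - m))) / 2) := by
    intro x
    unfold mvGaussDensity
    have hexps :
        (z' - M⁻¹ *ᵥ (Wᵀ *ᵥ x)) ⬝ᵥ ((v • M⁻¹)⁻¹ *ᵥ (z' - M⁻¹ *ᵥ (Wᵀ *ᵥ x)))
          + (x - W *ᵥ z) ⬝ᵥ ((v • (1 : Matrix (Fin n) (Fin n) ℝ))⁻¹ *ᵥ (x - W *ᵥ z))
        = (x - m) ⬝ᵥ ((v⁻¹ • AA) *ᵥ (x - m)) + R := by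
      rw [hvM, hv1inv, hRdef, hSinv]
      simp only [Matrix.smul_mulVec, dotProduct_smul, smul_eq_mul,
        Matrix.one_mulVec]
      rw [← mul_add, ← mul_add]
      congr 1
      rw [hJ]
      exact core_identity n k W M N hMsym hM'sym hN'sym hMM hM'M hNN hN'N hNdef
        AA hAAdef hAsym hAA'1 hA'A1 hAinv z z' x m hmdef
    have heq : Real.exp (-((z' - M⁻¹ *ᵥ (Wᵀ *ᵥ x)) ⬝ᵥ ((v • M⁻¹)⁻¹ *ᵥ (z' - M⁻¹ *ᵥ (Wᵀ *ᵥ x)))) / 2)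
        * Real.exp (-((x - W *ᵥ z) ⬝ᵥ ((v • (1 : Matrix (Fin n) (Fin n) ℝ))⁻¹ *ᵥ (x - W *ᵥ z))) / 2)
        = Real.exp (-R / 2) * Real.exp (-((x - m) ⬝ᵥ ((v⁻¹ • AA) *ᵥ (x - m))) / 2) := by
      rw [← Real.exp_add, ← Real.exp_add]
      congr 1
      have := hexps
      linarith
    rw [mul_mul_mul_comm, mul_comm
      (Real.exp (-((z' - M⁻¹ *ᵥ (Wᵀ *ᵥ x)) ⬝ᵥ ((v • M⁻¹)⁻¹ *ᵥ (z' - M⁻¹ *ᵥ (Wᵀ *ᵥ x)))) / 2))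
      (Real.exp (-((x - W *ᵥ z) ⬝ᵥ ((v • (1 : Matrix (Fin n) (Fin n) ℝ))⁻¹ *ᵥ (x - W *ᵥ z))) / 2)),
      mul_comm
      (Real.exp (-((x - W *ᵥ z) ⬝ᵥ ((v • (1 : Matrix (Fin n) (Fin n) ℝ))⁻¹ *ᵥ (x - W *ᵥ z))) / 2))
      (Real.exp (-((z' - M⁻¹ *ᵥ (Wᵀ *ᵥ x)) ⬝ᵥ ((v • M⁻¹)⁻¹ *ᵥ (z' - M⁻¹ *ᵥ (Wᵀ *ᵥ x)))) / 2)),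
      heq]
    ring
  rw [MeasureTheory.integral_congr_ae (Filter.Eventually.of_forall hpt)]
  rw [MeasureTheory.integral_const_mul, gauss_int hvApd m]
  -- now a pure constants computation
  unfold mvGaussDensity
  rw [← hRdef]
  -- determinant identity
  have hdetvM : (0:ℝ) < (v • M⁻¹).det := (posdef_smul v hv hMpd.inv).det_pos
  have hdetv1 : (0:ℝ) < (v • (1 : Matrix (Fin n) (Fin n) ℝ)).det := (hv1 n).det_pos
  have hdetvA : (0:ℝ) < ((v⁻¹ • AA) : Matrix (Fin n) (Fin n) ℝ).det := hvApd.det_pos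
  have hdetS : S.det = (v • M⁻¹).det * (v • (1 : Matrix (Fin n) (Fin n) ℝ)).det * (v⁻¹ • AA).det := by
    have hA_det : AA.det = N.det * M⁻¹.det := by
      rw [hAAdef, show W * M⁻¹ * Wᵀ = (W * M⁻¹) * Wᵀ from rfl, Matrix.det_one_add_mul_comm]
      rw [show (1 : Matrix (Fin k) (Fin k) ℝ) + Wᵀ * (W * M⁻¹) = N * M⁻¹ from by
        rw [hNdef, Matrix.add_mul, hMM, Matrix.mul_assoc], Matrix.det_mul]
    have hvv : (v⁻¹:ℝ) ^ n * v ^ n = 1 := by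
      rw [← mul_pow, inv_mul_cancel₀ hv.ne', one_pow]
    rw [hSval, Matrix.det_smul, Matrix.det_smul, Matrix.det_smul, Matrix.det_smul,
      Matrix.det_mul, Matrix.det_mul, Matrix.det_one, hA_det]
    simp only [Fintype.card_fin]
    linear_combination (-(v ^ k * M⁻¹.det * M⁻¹.det * N.det)) * hvv
  rw [hdetS]
  rw [Real.mul_rpow (by positivity) hdetvA.le, Real.mul_rpow hdetvM.le hdetv1.le]
  have h2pi : (2*π) ^ (-(n : ℝ)/2) * (2*π) ^ ((n : ℝ)/2) = 1 := by
    rw [← Real.rpow_add (by positivity), show (-(n : ℝ)/2 + (n : ℝ)/2) = 0 by ring,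
      Real.rpow_zero]
  linear_combination ((2 * π) ^ (-(k:ℝ) / 2) * (v • M⁻¹).det ^ ((-1:ℝ) / 2) *
    (v • (1 : Matrix (Fin n) (Fin n) ℝ)).det ^ ((-1:ℝ) / 2) *
    (v⁻¹ • AA).det ^ ((-1:ℝ) / 2) * Real.exp (-R / 2)) * h2pi
end
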